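/- arXiv:2209.01687 — 2 statements merged into one kernel-verified Lean document; each statement's English description precedes it below -/
import Mathlib

section
/- Fix α, ε > 0 and an integer m ≥ 2/(√α · ε). Suppose at some step a model f is patched on a group g of mass μ(g) using a rounded shift Δ = Round(Δ̃; m), where Δ̃ = E[y | g(x)=1] − E[f(x) | g(x)=1], and the unrounded patch would have reduced the Brier score by at least αε²/8 (i.e., μ(g)·Δ̃² ≥ αε²/8). Then the rounded patch reduces the Brier score by at least αε²/16: B(f) − B(f') ≥ αε²/8 − 1/(4m²) ≥ αε²/16, where f'(x) = f(x) + Δ for g(x)=1 and f'(x) = f(x) otherwise. -/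
/-!
Shifting `f` by a constant `c` on `g` changes the Brier score by `μ(g)·(2cΔ̃ − c²)`,
which equals `μ(g)·Δ̃² − μ(g)·(Δ̃ − c)²`. For `c = Δ` the first term is at least `αε²/8`,
and the rounding error `|Δ̃ − Δ| ≤ 1/(2m)` together with `μ(g) ≤ 1` bounds the second by
`1/(4m²)`, which the choice of `m` makes at most `αε²/16`.
-/

open scoped Classical
open Finset

noncomputable section

/-- Brier score of a model `f` under a weighted distribution `D` on `X × {0,1}`. -/
def brier {X : Type*} [Fintype X] (D : X → Bool → ℝ) (f : X → ℝ) : ℝ :=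
  ∑ x, ∑ y, D x y * (f x - (if y then 1 else 0)) ^ 2

/-- Mass of a set `S ⊆ X` under the marginal of `D`. -/
def mass {X : Type*} [Fintype X] (D : X → Bool → ℝ) (S : Set X) : ℝ :=
  ∑ x, if x ∈ S then D x true + D x false else 0

/-- Conditional expectation of the label `y` given `x ∈ S`. -/
def condY {X : Type*} [Fintype X] (D : X → Bool → ℝ) (S : Set X) : ℝ :=
  (∑ x, if x ∈ S then D x true else 0) / mass D S

/-- Conditional expectation of `f x` given `x ∈ S`. -/
def condExp {X : Type*} [Fintype X] (D : X → Bool → ℝ) (f : X → ℝ) (S : Set X) : ℝ :=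
  (∑ x, if x ∈ S then (D x true + D x false) * f x else 0) / mass D S

section

variable {X : Type*} [Fintype X] (D : X → Bool → ℝ)

theorem mass_le_one (hD : ∀ x y, 0 ≤ D x y) (hsum : ∑ x, (D x true + D x false) = 1)
    (S : Set X) : mass D S ≤ 1 := by
  rw [mass, ← hsum]
  refine Finset.sum_le_sum fun x _ => ?_
  split_ifs
  · exact le_rfl
  · linarith [hD x true, hD x false]

theorem mass_mul_condY_sub_condExp (f : X → ℝ) (S : Set X) (hS : mass D S ≠ 0) :
    mass D S * (condY D S - condExp D f S)
      = ∑ x, if x ∈ S then D x true - (D x true + D x false) * f x else 0 := by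
  rw [condY, condExp, mul_sub, mul_div_cancel₀ _ hS, mul_div_cancel₀ _ hS,
    ← Finset.sum_sub_distrib]
  refine Finset.sum_congr rfl fun x _ => ?_
  split_ifs <;> ring

theorem brier_sub_brier_shift (f : X → ℝ) (g : X → Bool) (c : ℝ) :
    brier D f - brier D (fun x => if g x then f x + c else f x)
      = 2 * c * (∑ x, if g x then D x true - (D x true + D x false) * f x else 0)
        - c ^ 2 * mass D {x | g x = true} := by
  rw [brier, brier, mass, mul_sum, mul_sum, ← sum_sub_distrib, ← sum_sub_distrib]
  refine Finset.sum_congr rfl fun x _ => ?_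
  simp only [Fintype.sum_bool, Set.mem_ofPred_eq]
  by_cases hx : g x <;> simp [hx]; ring

theorem brier_sub_brier_shift_eq_mass_mul (f : X → ℝ) (g : X → Bool) (c : ℝ)
    (hμ : mass D {x | g x = true} ≠ 0) :
    brier D f - brier D (fun x => if g x then f x + c else f x)
      = mass D {x | g x = true} * (2 * c * (condY D {x | g x = true}
          - condExp D f {x | g x = true}) - c ^ 2) := by
  have h : (∑ x, if g x then D x true - (D x true + D x false) * f x else 0)
      = mass D {x | g x = true} * (condY D {x | g x = true} - condExp D f {x | g x = true}) := by
    rw [mass_mul_condY_sub_condExp D f _ hμ]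
    -- the sums differ only in the `Decidable` instance of `g x = true`
    congr! 3
  rw [brier_sub_brier_shift, h]
  ring

theorem one_div_four_mul_sq_le {α ε m : ℝ} (hα : 0 < α) (hε : 0 < ε)
    (hm : m ≥ 2 / (Real.sqrt α * ε)) : 1 / (4 * m ^ 2) ≤ α * ε ^ 2 / 16 := by
  have hsa : 0 < Real.sqrt α := Real.sqrt_pos.mpr hα
  have hm2 : 2 ≤ m * (Real.sqrt α * ε) := (div_le_iff₀ (by positivity)).mp hm
  have hm4 : 4 ≤ m ^ 2 * (α * ε ^ 2) := by
    have := pow_le_pow_left₀ (by norm_num) hm2 2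
    rwa [mul_pow, mul_pow, Real.sq_sqrt hα.le, (by norm_num : (2 : ℝ) ^ 2 = 4)] at this
  have hm0 : 0 < m := lt_of_lt_of_le (by positivity) hm
  rw [div_le_div_iff₀ (by positivity) (by norm_num)]
  nlinarith

theorem sq_le_of_abs_le_one_div_two_mul {t m : ℝ} (h : |t| ≤ 1 / (2 * m)) :
    t ^ 2 ≤ 1 / (4 * m ^ 2) := by
  calc t ^ 2 = |t| ^ 2 := (sq_abs t).symm
    _ ≤ (1 / (2 * m)) ^ 2 := pow_le_pow_left₀ (abs_nonneg t) h 2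
    _ = 1 / (4 * m ^ 2) := by ring

end

/-- patching with a rounded shift still reduces the Brier score by `αε²/16`,
provided the grid is fine enough (`m ≥ 2/(√α·ε)`). -/
theorem rounded_patch_improvement {X : Type*} [Fintype X] (D : X → Bool → ℝ)
    (hD : ∀ x y, 0 ≤ D x y) (hsum : ∑ x, (D x true + D x false) = 1)
    (f : X → ℝ) (g : X → Bool) (α ε : ℝ) (hα : 0 < α) (hε : 0 < ε)
    (m : ℕ) (hm : (m : ℝ) ≥ 2 / (Real.sqrt α * ε))
    (hμpos : 0 < mass D {x | g x = true})
    (Δtil Δ : ℝ)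
    (hΔtil : Δtil = condY D {x | g x = true} - condExp D f {x | g x = true})
    (hround : |Δtil - Δ| ≤ 1 / (2 * (m : ℝ)))
    (hbig : mass D {x | g x = true} * Δtil ^ 2 ≥ α * ε ^ 2 / 8) :
    brier D f - brier D (fun x => if g x then f x + Δ else f x) ≥ α * ε ^ 2 / 8 - 1 / (4 * (m : ℝ) ^ 2) ∧
      α * ε ^ 2 / 8 - 1 / (4 * (m : ℝ) ^ 2) ≥ α * ε ^ 2 / 16 := by
  set μ := mass D {x | g x = true}
  have hgain : brier D f - brier D (fun x => if g x then f x + Δ else f x)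
      = μ * Δtil ^ 2 - μ * (Δtil - Δ) ^ 2 := by
    rw [brier_sub_brier_shift_eq_mass_mul D f g Δ hμpos.ne', ← hΔtil]
    ring
  have hloss : μ * (Δtil - Δ) ^ 2 ≤ 1 / (4 * (m : ℝ) ^ 2) :=
    calc μ * (Δtil - Δ) ^ 2 ≤ 1 * (Δtil - Δ) ^ 2 :=
          mul_le_mul_of_nonneg_right (mass_le_one D hD hsum _) (sq_nonneg _)
      _ ≤ 1 / (4 * (m : ℝ) ^ 2) := by
          rw [one_mul]; exact sq_le_of_abs_le_one_div_two_mul hround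
  have hgrid := one_div_four_mul_sq_le hα hε hm
  constructor <;> linarith
end
end

section
/- Let f₁, f₂ : X → [0,1], ε > 0, and suppose μ(U_ε^•(f₁,f₂)) ≥ α/2 for some • ∈ {>,<}, where U_ε^>(f₁,f₂) = {x : f₁(x) − f₂(x) > ε}. Then for at least one i ∈ {1,2}, |μ(U_ε^•) · E[y − f_i(x) | x ∈ U_ε^•]| ≥ αε/4, and moreover μ(U_ε^•)·E[y − f_i(x) | x ∈ U_ε^•]² ≥ αε²/8. -/
open scoped Classical
open Finset

noncomputable section

/-
Averaging the pointwise gap over `U` shows that the conditional means of `f₁` and `f₂` on `U` differ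
by at least `ε`, so by the triangle inequality one of them is at distance at least `ε/2` from the
conditional mean of `y`; multiplying by `μ(U) ≥ α/2` gives both bounds.
-/

section CondExp

variable {X : Type*} [Fintype X] (D : X → Bool → ℝ)

theorem condExp_sub (f g : X → ℝ) (S : Set X) :
    condExp D (f - g) S = condExp D f S - condExp D g S := by
  rw [condExp, condExp, condExp, ← sub_div, ← sum_sub_distrib]
  congr 1
  refine sum_congr rfl fun x _ => ?_
  split_ifs <;> simp [mul_sub]

variable {D}

theorem le_condExp (hD : ∀ x y, 0 ≤ D x y) {S : Set X} (hS : 0 < mass D S) {f : X → ℝ} {c : ℝ}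
    (hf : ∀ x ∈ S, c ≤ f x) : c ≤ condExp D f S := by
  rw [condExp, le_div_iff₀ hS, mass, mul_sum]
  refine sum_le_sum fun x _ => ?_
  split_ifs with hx
  · rw [mul_comm]
    exact mul_le_mul_of_nonneg_left (hf x hx) (add_nonneg (hD x true) (hD x false))
  · rw [mul_zero]

theorem le_abs_condExp_sub (hD : ∀ x y, 0 ≤ D x y) {S : Set X} (hS : 0 < mass D S)
    {f g : X → ℝ} {c : ℝ} (h : (∀ x ∈ S, c ≤ f x - g x) ∨ ∀ x ∈ S, c ≤ g x - f x) :
    c ≤ |condExp D f S - condExp D g S| := by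
  rcases h with h | h
  · rw [← condExp_sub]
    exact (le_condExp hD hS h).trans (le_abs_self _)
  · rw [abs_sub_comm, ← condExp_sub]
    exact (le_condExp hD hS h).trans (le_abs_self _)

end CondExp

theorem half_le_abs_or_half_le_abs {a b c : ℝ} (h : c ≤ |a - b|) : c / 2 ≤ |a| ∨ c / 2 ≤ |b| := by
  by_contra! hab
  linarith [abs_sub a b]

theorem mass_mul_bounds {m c α ε : ℝ} (hα : 0 ≤ α) (hε : 0 ≤ ε) (hm : α / 2 ≤ m)
    (hc : ε / 2 ≤ |c|) : α * ε / 4 ≤ |m * c| ∧ α * ε ^ 2 / 8 ≤ m * c ^ 2 := by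
  have hm0 : 0 ≤ m := by linarith
  have hc2 : (ε / 2) ^ 2 ≤ c ^ 2 := by
    rw [← sq_abs c]
    exact pow_le_pow_left₀ (by linarith) hc 2
  constructor
  · rw [abs_mul, abs_of_nonneg hm0]
    calc α * ε / 4 = (α / 2) * (ε / 2) := by ring
      _ ≤ m * |c| := mul_le_mul hm hc (by linarith) hm0
  · calc α * ε ^ 2 / 8 = (α / 2) * (ε / 2) ^ 2 := by ring
      _ ≤ m * c ^ 2 := mul_le_mul hm hc2 (by positivity) hm0

theorem disagreement_contestation_general {X : Type*} [Fintype X] (D : X → Bool → ℝ)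
    (hD : ∀ x y, 0 ≤ D x y)
    (f₁ f₂ : X → ℝ)
    (ε α : ℝ) (hε : 0 < ε) (hα : 0 < α) (U : Set X)
    (hU : U = {x | f₁ x - f₂ x > ε} ∨ U = {x | f₂ x - f₁ x > ε})
    (hmass : mass D U ≥ α / 2) :
    ∃ f ∈ ({f₁, f₂} : Set (X → ℝ)),
      α * ε / 4 ≤ |mass D U * (condY D U - condExp D f U)| ∧
        α * ε ^ 2 / 8 ≤ mass D U * (condY D U - condExp D f U) ^ 2 := by
  have hU₀ : 0 < mass D U := lt_of_lt_of_le (by positivity) hmass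
  have hgap : ε ≤ |(condY D U - condExp D f₁ U) - (condY D U - condExp D f₂ U)| := by
    rw [sub_sub_sub_cancel_left]
    refine le_abs_condExp_sub hD hU₀ ?_
    rcases hU with rfl | rfl
    · exact Or.inr fun x hx => le_of_lt hx
    · exact Or.inl fun x hx => le_of_lt hx
  rcases half_le_abs_or_half_le_abs hgap with h | h
  · exact ⟨f₁, Set.mem_insert _ _, mass_mul_bounds hα.le hε.le hmass h⟩
  · exact ⟨f₂, Set.mem_insert_of_mem _ rfl, mass_mul_bounds hα.le hε.le hmass h⟩

/-- a disagreement piece of mass at least `α/2` witnesses both a large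
contestation statistic `|μ(U)·E[y − fᵢ(x) | x ∈ U]| ≥ αε/4` and a large mean-consistency
violation `μ(U)·E[y − fᵢ(x) | x ∈ U]² ≥ αε²/8` for one of the two models. -/
theorem disagreement_contestation {X : Type*} [Fintype X] (D : X → Bool → ℝ)
    (hD : ∀ x y, 0 ≤ D x y) (hsum : ∑ x, (D x true + D x false) = 1)
    (f₁ f₂ : X → ℝ) (hf₁ : ∀ x, f₁ x ∈ Set.Icc (0 : ℝ) 1) (hf₂ : ∀ x, f₂ x ∈ Set.Icc (0 : ℝ) 1)
    (ε α : ℝ) (hε : 0 < ε) (hα : 0 < α) (U : Set X)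
    (hU : U = {x | f₁ x - f₂ x > ε} ∨ U = {x | f₂ x - f₁ x > ε})
    (hmass : mass D U ≥ α / 2) :
    ∃ f ∈ ({f₁, f₂} : Set (X → ℝ)),
      α * ε / 4 ≤ |mass D U * (condY D U - condExp D f U)| ∧
        α * ε ^ 2 / 8 ≤ mass D U * (condY D U - condExp D f U) ^ 2 :=
  disagreement_contestation_general D hD f₁ f₂ ε α hε hα U hU hmass
end
end
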